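/- arXiv:1411.0178 — 2 statements merged into one kernel-verified Lean document; each statement's English description precedes it below -/
import Mathlib

section
/- For n ≥ 2 and d ≥ 1, every automorphism of the Kneser graph/complex K(n, S) with S = {1, ..., nd+1} is induced by a permutation of S; i.e., the automorphism group of K(n,S) is isomorphic to Sym(S). -/
/-!
If `|S| = n + 1`, the `n`-subsets of `S` are the complements of points, so every bijection
of the vertices comes from a permutation of `S`.

If `|S| ≥ 2n + 1`, two `n`-sets `A`, `B` have `C(|S| - |A ∪ B|, n)` common neighbours in the
Kneser graph, and this number singles out `|A ∪ B| = n + 1`. So a Kneser automorphism is an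
automorphism of the Johnson graph (adjacency `|A ∪ B| = n + 1`). In the Johnson graph the
`n`-sets containing a fixed `(n - 1)`-set `U` form a clique of size `|S| - n + 1 > n + 1`, and a
clique that large always has this form (it is a sunflower). The automorphism therefore permutes
these cliques, which gives a Johnson automorphism on `(n - 1)`-sets compatible with inclusion;
descending to points yields the permutation.
-/

/-- The Kneser graph on the `n`-element subsets of a type `α`:
two `n`-subsets are adjacent iff they are disjoint. -/
def kneserGraph (n : ℕ) (α : Type*) [DecidableEq α] :
    SimpleGraph {s : Finset α // s.card = n} where
  Adj v w := v ≠ w ∧ Disjoint v.1 w.1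
  symm := ⟨fun _ _ h => ⟨h.1.symm, h.2.symm⟩⟩
  loopless := ⟨fun _ h => h.1 rfl⟩

open Finset Function

def johnsonGraph (n : ℕ) (α : Type*) [DecidableEq α] : SimpleGraph {s : Finset α // #s = n} where
  Adj A B := #(A.1 ∪ B.1) = n + 1
  symm := ⟨fun A B h => by rwa [union_comm]⟩
  loopless := ⟨fun A h => by rw [union_self, A.2] at h; omega⟩

variable {α : Type*} {n k : ℕ}

theorem Nat.choose_lt_choose_succ {m r : ℕ} (hr : 1 ≤ r) (hm : r ≤ m + 1) :
    m.choose r < (m + 1).choose r := by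
  obtain ⟨r, rfl⟩ : ∃ j, r = j + 1 := ⟨r - 1, by omega⟩
  rw [Nat.choose_succ_succ']
  have := Nat.choose_pos (show r ≤ m by omega)
  omega

theorem card_filter_subtype_eq [Fintype α] (P : Finset α → Prop) [DecidablePred P] :
    #(univ.filter fun A : {s : Finset α // #s = k} => P A.1) =
      #((powersetCard k univ).filter P) := by
  rw [← card_map (Embedding.subtype _)]
  congr 1
  ext s
  simp [mem_powersetCard, and_comm]

variable [DecidableEq α]

namespace Finset

theorem inter_eq_erase_of_card_le {s t : Finset α} {x : α} (hxs : x ∈ s) (hxt : x ∉ t)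
    (h : #s ≤ #(s ∩ t) + 1) : s ∩ t = s.erase x := by
  refine eq_of_subset_of_card_le (fun y hy => ?_) (by rw [card_erase_of_mem hxs]; omega)
  obtain ⟨hys, hyt⟩ := mem_inter.1 hy
  exact mem_erase.2 ⟨fun hyx => hxt (hyx ▸ hyt), hys⟩

theorem succ_le_card_union_of_ne {s t : Finset α} (hs : #s = n) (ht : #t = n)
    (hst : s ≠ t) : n + 1 ≤ #(s ∪ t) := by
  by_contra! h
  have hs' := eq_of_subset_of_card_le (subset_union_left : s ⊆ s ∪ t) (by omega)
  have ht' := eq_of_subset_of_card_le (subset_union_right : t ⊆ s ∪ t) (by omega)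
  exact hst (hs'.trans ht'.symm)

theorem exists_core_of_pairwise_card_union_eq {r : ℕ} {G : Finset (Finset α)}
    (hcard : ∀ W ∈ G, #W = r + 1)
    (hpair : ∀ W ∈ G, ∀ W' ∈ G, W ≠ W' → #(W ∪ W') = r + 2) (hG : r + 3 ≤ #G) :
    ∃ V, #V = r ∧ ∀ W ∈ G, V ⊆ W := by
  have hinter : ∀ W ∈ G, ∀ W' ∈ G, W ≠ W' → #(W ∩ W') = r := by
    intro W hW W' hW' hne
    have := card_union_add_card_inter W W'
    rw [hpair W hW W' hW' hne, hcard W hW, hcard W' hW'] at this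
    omega
  have herase : ∀ W ∈ G, ∀ W' ∈ G, ∀ x ∈ W, x ∉ W' → W ∩ W' = W.erase x := by
    intro W hW W' hW' x hx hx'
    have hne : W ≠ W' := by rintro rfl; exact hx' hx
    exact inter_eq_erase_of_card_le hx hx' (by rw [hinter W hW W' hW' hne, hcard W hW])
  obtain ⟨W₁, h₁, W₂, h₂, h₁₂⟩ := one_lt_card.1 (by omega : 1 < #G)
  set V := W₁ ∩ W₂
  have hV : #V = r := hinter W₁ h₁ W₂ h₂ h₁₂
  have hout : ∀ W ∈ G, ∀ x ∈ W, x ∉ W₁ ∪ W₂ → W.erase x = V := by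
    intro W hW x hx hx₁₂
    rw [notMem_union] at hx₁₂
    refine eq_of_subset_of_card_le (subset_inter ?_ ?_) ?_
    · rw [← herase W hW W₁ h₁ x hx hx₁₂.1]; exact inter_subset_right
    · rw [← herase W hW W₂ h₂ x hx hx₁₂.2]; exact inter_subset_right
    · rw [hV, card_erase_of_mem hx, hcard W hW]; omega
  refine ⟨V, hV, ?_⟩
  by_contra! ⟨W₀, h₀, hV₀⟩
  -- a member missing a point of `V` forces every member into `W₁ ∪ W₂`, which has only
  -- `r + 2` subsets of size `r + 1`
  have hsub₀ : W₀ ⊆ W₁ ∪ W₂ := fun x hx => by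
    by_contra hx'
    exact hV₀ (hout W₀ h₀ x hx hx' ▸ erase_subset x W₀)
  have hsub : G ⊆ powersetCard (r + 1) (W₁ ∪ W₂) := by
    refine fun W hW => mem_powersetCard.2 ⟨fun x hx => ?_, hcard W hW⟩
    by_contra hx'
    apply hV₀
    rw [← hout W hW x hx hx', ← herase W hW W₀ h₀ x hx (fun h => hx' (hsub₀ h))]
    exact inter_subset_right
  have := card_le_card hsub
  rw [card_powersetCard, hpair W₁ h₁ W₂ h₂ h₁₂, Nat.choose_succ_self_right] at this
  omega

end Finset

theorem kneserGraph_adj_iff (hn : 1 ≤ n) {A B : {s : Finset α // #s = n}} :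
    (kneserGraph n α).Adj A B ↔ Disjoint A.1 B.1 := by
  refine ⟨And.right, fun h => ⟨fun hAB => ?_, h⟩⟩
  rw [← hAB, disjoint_self_iff_empty] at h
  have := A.2
  rw [h, card_empty] at this
  omega

variable (n) in
def permToKneserGraphAut : Equiv.Perm α →* (kneserGraph n α ≃g kneserGraph n α) where
  toFun π :=
    { toEquiv := π.finsetCongr.subtypeEquiv fun s => by simp
      map_rel_iff' := by simp [kneserGraph] }
  map_one' := RelIso.ext fun A => Subtype.ext A.1.map_refl
  map_mul' π σ := RelIso.ext fun A => Subtype.ext (A.1.map_map σ.toEmbedding π.toEmbedding).symm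

theorem permToKneserGraphAut_apply (π : Equiv.Perm α) (A : {s : Finset α // #s = n}) :
    (permToKneserGraphAut n π A).1 = A.1.image π :=
  map_eq_image _ _

variable [Fintype α]

def supersets (k : ℕ) (U : Finset α) : Finset {s : Finset α // #s = k} :=
  univ.filter (U ⊆ ·.1)

theorem mem_supersets {U : Finset α} {A : {s : Finset α // #s = k}} :
    A ∈ supersets k U ↔ U ⊆ A.1 := by
  simp [supersets]

theorem card_supersets {U : Finset α} (hU : #U ≤ k) :
    #(supersets k U) = (Fintype.card α - #U).choose (k - #U) := by
  rw [supersets, card_filter_subtype_eq (U ⊆ ·),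
    card_filter_powersetCard_subset _ _ _ (subset_univ U) hU, card_univ]

theorem supersets_inter (U U' : Finset α) :
    supersets k U ∩ supersets k U' = supersets k (U ∪ U') := by
  ext A
  simp [mem_supersets, union_subset_iff]

theorem subset_of_supersets_subset {U U' : Finset α} (hU' : #U' ≤ k)
    (hk : k < Fintype.card α) (h : supersets k U' ⊆ supersets k U) : U ⊆ U' := by
  intro x hx
  by_contra hx'
  obtain ⟨A, hU'A, hA, hAcard⟩ := exists_subsuperset_card_eq
    (fun y hy => mem_erase.2 ⟨fun hyx => hx' (hyx ▸ hy), mem_univ y⟩ : U' ⊆ univ.erase x) hU'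
    (by rw [card_erase_of_mem (mem_univ x), card_univ]; omega)
  have hUA := mem_supersets.1 (h ((mem_supersets (A := ⟨A, hAcard⟩)).2 hU'A))
  exact (mem_erase.1 (hA (hUA hx))).1 rfl

theorem johnsonGraph_adj_of_mem_supersets {U : Finset α} (hU : #U = n)
    {A B : {s : Finset α // #s = n + 1}} (hA : A ∈ supersets (n + 1) U)
    (hB : B ∈ supersets (n + 1) U) (hAB : A ≠ B) : (johnsonGraph (n + 1) α).Adj A B := by
  have hinter := card_le_card (subset_inter (mem_supersets.1 hA) (mem_supersets.1 hB))
  have hunion := succ_le_card_union_of_ne A.2 B.2 (Subtype.coe_injective.ne hAB)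
  have := card_union_add_card_inter A.1 B.1
  simp only [johnsonGraph, A.2, B.2] at *
  omega

theorem johnsonGraph_adj_iff {U U' : {s : Finset α // #s = n}} :
    (johnsonGraph n α).Adj U U' ↔
      U ≠ U' ∧ (supersets (n + 1) U.1 ∩ supersets (n + 1) U'.1).Nonempty := by
  rw [supersets_inter]
  constructor
  · intro h
    exact ⟨(johnsonGraph n α).ne_of_adj h, ⟨⟨_, h⟩, mem_supersets.2 subset_rfl⟩⟩
  · rintro ⟨hne, A, hA⟩
    have := card_le_card (mem_supersets.1 hA)
    have := succ_le_card_union_of_ne U.2 U'.2 (Subtype.coe_injective.ne hne)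
    change #(U.1 ∪ U'.1) = n + 1
    omega

theorem exists_map_supersets_eq (hα : 2 * n + 3 ≤ Fintype.card α)
    (f : johnsonGraph (n + 1) α ↪g johnsonGraph (n + 1) α) {U : Finset α} (hU : #U = n) :
    ∃ V : Finset α, #V = n ∧
      (supersets (n + 1) U).map f.toEmbedding = supersets (n + 1) V := by
  have hcard : ∀ {V : Finset α}, #V = n → #(supersets (n + 1) V) = Fintype.card α - n := by
    intro V hV
    rw [card_supersets (by omega), hV, Nat.add_sub_cancel_left, Nat.choose_one_right]
  have hinj : Injective fun A : {s : Finset α // #s = n + 1} => (f A).1 :=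
    Subtype.coe_injective.comp f.injective
  obtain ⟨V, hV, hsub⟩ := exists_core_of_pairwise_card_union_eq
    (G := (supersets (n + 1) U).image fun A => (f A).1) (r := n)
    (by simp only [mem_image]; rintro _ ⟨A, -, rfl⟩; exact (f A).2)
    (by
      simp only [mem_image]
      rintro _ ⟨A, hA, rfl⟩ _ ⟨B, hB, rfl⟩ hne
      exact f.map_adj_iff.2 (johnsonGraph_adj_of_mem_supersets hU hA hB (fun h => hne (h ▸ rfl))))
    (by rw [card_image_of_injective _ hinj, hcard hU]; omega)
  refine ⟨V, hV, eq_of_subset_of_card_le ?_ (by rw [card_map, hcard hU, hcard hV])⟩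
  simp only [subset_iff, mem_map, mem_supersets]
  rintro _ ⟨A, hA, rfl⟩
  exact hsub _ (mem_image_of_mem _ (mem_supersets.2 hA))

theorem exists_johnsonGraph_embedding_of_succ (hα : 2 * n + 3 ≤ Fintype.card α)
    (f : johnsonGraph (n + 1) α ↪g johnsonGraph (n + 1) α) :
    ∃ φ : johnsonGraph n α ↪g johnsonGraph n α, ∀ U A, U.1 ⊆ A.1 → (φ U).1 ⊆ (f A).1 := by
  choose V hVcard hV using fun U : {s : Finset α // #s = n} => exists_map_supersets_eq hα f U.2
  set φ : {s : Finset α // #s = n} → {s : Finset α // #s = n} := fun U => ⟨V U, hVcard U⟩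
  have hφ : ∀ U, (supersets (n + 1) U.1).map f.toEmbedding = supersets (n + 1) (φ U).1 := hV
  have hφinj : Injective φ := by
    intro U U' h
    have hUU' : supersets (n + 1) U.1 = supersets (n + 1) U'.1 :=
      map_injective f.toEmbedding (by rw [hφ, hφ, h])
    exact Subtype.ext (subset_antisymm
      (subset_of_supersets_subset (by rw [U'.2]; omega) (by omega) hUU'.ge)
      (subset_of_supersets_subset (by rw [U.2]; omega) (by omega) hUU'.le))
  refine ⟨⟨⟨φ, hφinj⟩, fun {U U'} => ?_⟩, fun U A hUA => ?_⟩
  · simp only [Embedding.coeFn_mk, johnsonGraph_adj_iff, hφinj.ne_iff, ← hφ, ← map_inter,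
      map_nonempty]
  · change (φ U).1 ⊆ (f A).1
    rw [← mem_supersets, ← hφ]
    exact mem_map_of_mem _ (mem_supersets.2 hUA)

theorem exists_perm_of_forall_mem (f : {s : Finset α // #s = n} → {s : Finset α // #s = n})
    {p : α → α} (hp : Injective p) (h : ∀ A x, x ∈ A.1 → p x ∈ (f A).1) :
    ∃ π : Equiv.Perm α, ∀ A, (f A).1 = A.1.image π := by
  refine ⟨Equiv.ofBijective p hp.bijective_of_finite, fun A => (eq_of_subset_of_card_le ?_ ?_).symm⟩
  · exact image_subset_iff.2 (h A)
  · rw [(f A).2, card_image_of_injective _ (Equiv.injective _), A.2]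

theorem exists_perm_of_johnsonGraph_embedding (hn : 1 ≤ n) (hα : 2 * n + 1 ≤ Fintype.card α)
    (f : johnsonGraph n α ↪g johnsonGraph n α) :
    ∃ π : Equiv.Perm α, ∀ A, (f A).1 = A.1.image π := by
  induction n, hn using Nat.le_induction with
  | base =>
    choose p hp using fun x : α => card_eq_one.1 (f ⟨{x}, card_singleton x⟩).2
    refine exists_perm_of_forall_mem f (p := p) (fun x y hxy => ?_) (fun A x hx => ?_)
    · have hfxy : f ⟨{x}, card_singleton x⟩ = f ⟨{y}, card_singleton y⟩ :=
        Subtype.ext (by rw [hp, hp, hxy])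
      exact singleton_injective (congrArg Subtype.val (f.injective hfxy))
    · obtain ⟨a, ha⟩ := card_eq_one.1 A.2
      obtain rfl : x = a := mem_singleton.1 (ha ▸ hx)
      rw [show A = ⟨{x}, card_singleton x⟩ from Subtype.ext ha, hp]
      exact mem_singleton_self _
  | succ n hn ih =>
    obtain ⟨φ, hφ⟩ := exists_johnsonGraph_embedding_of_succ (by omega) f
    obtain ⟨π, hπ⟩ := ih (by omega) φ
    refine exists_perm_of_forall_mem f π.injective fun A x hx => ?_
    obtain ⟨U, hxU, hUA, hU⟩ := exists_subsuperset_card_eq (n := n) (singleton_subset_iff.2 hx)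
      (by rw [card_singleton]; exact hn) (by rw [A.2]; omega)
    exact hφ ⟨U, hU⟩ A hUA (hπ ⟨U, hU⟩ ▸ mem_image_of_mem π (hxU (mem_singleton_self x)))

theorem card_filter_disjoint (X : Finset α) :
    #(univ.filter fun C : {s : Finset α // #s = n} => Disjoint C.1 X) =
      (Fintype.card α - #X).choose n := by
  rw [card_filter_subtype_eq (Disjoint · X), ← card_compl, ← card_powersetCard]
  congr 1
  ext s
  simp [mem_powersetCard, subset_compl_iff_disjoint_right, and_comm]

-- `C(|α| - |A ∪ B|, n)` is the number of common neighbours of `A` and `B` in the Kneser graph.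
theorem card_union_choose_kneserGraph_iso (hn : 1 ≤ n) (f : kneserGraph n α ≃g kneserGraph n α)
    (A B : {s : Finset α // #s = n}) :
    (Fintype.card α - #((f A).1 ∪ (f B).1)).choose n =
      (Fintype.card α - #(A.1 ∪ B.1)).choose n := by
  rw [← card_filter_disjoint, ← card_filter_disjoint]
  refine (card_equiv f.toEquiv fun C => ?_).symm
  simp only [mem_filter, mem_univ, true_and, disjoint_union_right, ← kneserGraph_adj_iff hn]
  exact (and_congr f.map_adj_iff f.map_adj_iff).symm

theorem kneserGraph_iso_map_johnsonGraph_adj (hn : 1 ≤ n) (hα : 2 * n + 1 ≤ Fintype.card α)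
    (f : kneserGraph n α ≃g kneserGraph n α) {A B : {s : Finset α // #s = n}}
    (h : (johnsonGraph n α).Adj A B) : (johnsonGraph n α).Adj (f A) (f B) := by
  have hcount := card_union_choose_kneserGraph_iso hn f A B
  have hge := succ_le_card_union_of_ne (f A).2 (f B).2
    (Subtype.coe_injective.ne (f.injective.ne ((johnsonGraph n α).ne_of_adj h)))
  change #((f A).1 ∪ (f B).1) = n + 1
  change #(A.1 ∪ B.1) = n + 1 at h
  by_contra hne
  have hmono := Nat.choose_le_choose n
    (show Fintype.card α - #((f A).1 ∪ (f B).1) ≤ Fintype.card α - (n + 2) by omega)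
  have hlt := Nat.choose_lt_choose_succ hn (show n ≤ Fintype.card α - (n + 2) + 1 by omega)
  rw [show Fintype.card α - (n + 2) + 1 = Fintype.card α - (n + 1) by omega] at hlt
  rw [h] at hcount
  omega

theorem exists_perm_of_card_eq_succ (hα : Fintype.card α = n + 1)
    (f : {s : Finset α // #s = n} ≃ {s : Finset α // #s = n}) :
    ∃ π : Equiv.Perm α, ∀ A, (f A).1 = A.1.image π := by
  have hcard : ∀ x : α, #(univ.erase x) = n := fun x => by
    rw [card_erase_of_mem (mem_univ x), card_univ, hα, Nat.add_sub_cancel]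
  let c : α → {s : Finset α // #s = n} := fun x => ⟨univ.erase x, hcard x⟩
  have hc : Bijective c := by
    refine ⟨fun x y hxy => ?_, fun A => ?_⟩
    · by_contra hne
      have := congrArg (y ∈ ·.1) hxy
      simp [c, Ne.symm hne] at this
    · obtain ⟨x, hx⟩ : ∃ x, x ∉ A.1 := by
        by_contra! h
        have := card_le_card (fun x _ => h x : univ ⊆ A.1)
        rw [card_univ, hα, A.2] at this
        omega
      refine ⟨x, Subtype.ext (eq_of_subset_of_card_le ?_ (by rw [hcard, A.2])).symm⟩
      exact fun y hy => mem_erase.2 ⟨fun hyx => hx (hyx ▸ hy), mem_univ y⟩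
  let e := Equiv.ofBijective c hc
  let π := e.trans (f.trans e.symm)
  refine ⟨π, fun A => ?_⟩
  obtain ⟨x, rfl⟩ := hc.2 A
  have hfx : f (c x) = c (π x) := (e.apply_symm_apply _).symm
  rw [hfx]
  change univ.erase (π x) = (univ.erase x).image π
  rw [image_erase π.injective, image_univ_equiv]

theorem exists_perm_of_kneserGraph_iso (hn : 1 ≤ n)
    (hα : Fintype.card α = n + 1 ∨ 2 * n + 1 ≤ Fintype.card α)
    (f : kneserGraph n α ≃g kneserGraph n α) :
    ∃ π : Equiv.Perm α, ∀ A, (f A).1 = A.1.image π := by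
  rcases hα with hα | hα
  · exact exists_perm_of_card_eq_succ hα f.toEquiv
  · refine exists_perm_of_johnsonGraph_embedding hn hα ⟨f.toEquiv.toEmbedding, fun {A B} =>
      ⟨fun h => ?_, kneserGraph_iso_map_johnsonGraph_adj hn hα f⟩⟩
    simpa using kneserGraph_iso_map_johnsonGraph_adj hn hα f.symm h

theorem permToKneserGraphAut_injective (hn : 1 ≤ n) (hα : n < Fintype.card α) :
    Injective (permToKneserGraphAut n (α := α)) := by
  refine (injective_iff_map_eq_one _).2 fun π hπ => Equiv.ext fun x => ?_
  by_contra hx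
  obtain ⟨A, hxA, hA, hAcard⟩ := exists_subsuperset_card_eq (n := n)
    (singleton_subset_iff.2 (mem_erase.2 ⟨Ne.symm hx, mem_univ x⟩) : {x} ⊆ univ.erase (π x))
    (by rw [card_singleton]; exact hn) (by rw [card_erase_of_mem (mem_univ _), card_univ]; omega)
  have hfix : A.image π = A := by
    rw [← permToKneserGraphAut_apply (A := ⟨A, hAcard⟩), hπ]
    rfl
  have : π x ∈ A := hfix ▸ mem_image_of_mem π (hxA (mem_singleton_self x))
  exact (mem_erase.1 (hA this)).1 rfl

theorem permToKneserGraphAut_bijective (hn : 1 ≤ n)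
    (hα : Fintype.card α = n + 1 ∨ 2 * n + 1 ≤ Fintype.card α) :
    Bijective (permToKneserGraphAut n (α := α)) := by
  refine ⟨permToKneserGraphAut_injective hn (by omega), fun f => ?_⟩
  obtain ⟨π, hπ⟩ := exists_perm_of_kneserGraph_iso hn hα f
  exact ⟨π, RelIso.ext fun A => Subtype.ext ((permToKneserGraphAut_apply π A).trans (hπ A).symm)⟩

/-- For `n ≥ 2` and `d ≥ 1`, every automorphism of the Kneser graph `K(n,S)` with
`S = {1,…,nd+1}` is induced by a permutation of `S`; in fact its automorphism group
is isomorphic to `Sym(S)`. -/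
theorem stmt_1 (n d : ℕ) (hn : 2 ≤ n) (hd : 1 ≤ d) :
    (∀ f : kneserGraph n (Fin (n * d + 1)) ≃g kneserGraph n (Fin (n * d + 1)),
        ∃ π : Equiv.Perm (Fin (n * d + 1)),
          ∀ v : {s : Finset (Fin (n * d + 1)) // s.card = n},
            (f v : {s : Finset (Fin (n * d + 1)) // s.card = n}).1 = v.1.image π) ∧
      Nonempty ((kneserGraph n (Fin (n * d + 1)) ≃g kneserGraph n (Fin (n * d + 1)))
        ≃* Equiv.Perm (Fin (n * d + 1))) := by
  have hα : Fintype.card (Fin (n * d + 1)) = n + 1 ∨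
      2 * n + 1 ≤ Fintype.card (Fin (n * d + 1)) := by
    rw [Fintype.card_fin]
    rcases Nat.lt_or_ge d 2 with hd' | hd'
    · left
      rw [show d = 1 by omega, mul_one]
    · right
      nlinarith
  exact ⟨exists_perm_of_kneserGraph_iso (by omega) hα,
    ⟨(MulEquiv.ofBijective _ (permToKneserGraphAut_bijective (by omega) hα)).symm⟩⟩
end

section
/- Let F = ∏_{n∈ℤ} G_n be the unrestricted product of copies G_n = G of a group G, and let σ : F → F be the shift automorphism, σ((f_n)_{n∈ℤ}) = (f_{n−1})_{n∈ℤ}. Then the map F → F given by f' ↦ f'⁻¹ · σ(f') is surjective. Consequently, in the semidirect product F ⋊_σ ℤ, the subgroup F equals the set of commutators [f', σ] with f' ∈ F, so F is contained in the commutator subgroup. -/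
/-- The shift automorphism of the unrestricted product `∏_{n ∈ ℤ} G`:
`(σ f) n = f (n − 1)`. -/
def shiftAut (G : Type*) [Group G] : (ℤ → G) ≃* (ℤ → G) where
  toFun f n := f (n - 1)
  invFun f n := f (n + 1)
  left_inv f := funext fun n => by simp
  right_inv f := funext fun n => by simp
  map_mul' f g := rfl

/-- The action of `ℤ` (written multiplicatively) on `∏_{n ∈ ℤ} G` by powers of the
shift automorphism. -/
def shiftAction (G : Type*) [Group G] : Multiplicative ℤ →* MulAut (ℤ → G) :=
  zpowersHom (MulAut (ℤ → G)) (shiftAut G)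

/-!
Solving `f'⁻¹ * σ f' = f` coordinatewise means `f' n = f' (n - 1) * (f n)⁻¹` for every `n`.
Since right multiplication is a bijection of `G`, this recursion can be started at
`f' 0 = 1` and run in both directions; as the product is unrestricted, no support
condition gets in the way. In `F ⋊_σ ℤ` the commutator `[f', σ]` is `f' * σ (f'⁻¹)`,
so applying this to `f'⁻¹` exhibits every element of `F` as a commutator.
-/

section EquivSeq

variable {α : Type*} (e : ℤ → α ≃ α) (a : α)

def equivSeqNat : ℕ → α
  | 0 => a
  | k + 1 => e (k + 1) (equivSeqNat k)

def equivSeqNeg : ℕ → α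
  | 0 => (e 0).symm a
  | k + 1 => (e (-(k + 1 : ℕ))).symm (equivSeqNeg k)

def equivSeq : ℤ → α
  | Int.ofNat k => equivSeqNat e a k
  | Int.negSucc k => equivSeqNeg e a k

theorem equivSeq_apply (n : ℤ) : equivSeq e a n = e n (equivSeq e a (n - 1)) := by
  match n with
  | Int.ofNat 0 => exact ((e 0).apply_symm_apply a).symm
  | Int.ofNat (k + 1) =>
    show _ = e (k + 1 : ℕ) (equivSeq e a ((k + 1 : ℕ) - 1))
    rw [Nat.cast_succ, add_sub_cancel_right]
    rfl
  | Int.negSucc k =>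
    show equivSeqNeg e a k = e (Int.negSucc k) (equivSeqNeg e a (k + 1))
    exact ((e _).apply_symm_apply _).symm

end EquivSeq

theorem shiftAut_apply {G : Type*} [Group G] (f : ℤ → G) (n : ℤ) :
    shiftAut G f n = f (n - 1) :=
  rfl

theorem shiftAction_ofAdd_one (G : Type*) [Group G] :
    shiftAction G (Multiplicative.ofAdd 1) = shiftAut G := by
  simp [shiftAction]

theorem surjective_inv_mul_shiftAut (G : Type*) [Group G] :
    Function.Surjective (fun f' : ℤ → G => f'⁻¹ * shiftAut G f') := by
  intro f
  refine ⟨equivSeq (fun n => Equiv.mulRight (f n)⁻¹) 1, funext fun n => ?_⟩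
  simp only [Pi.mul_apply, Pi.inv_apply, shiftAut_apply, equivSeq_apply _ _ n,
    Equiv.coe_mulRight, mul_inv_rev, inv_inv, inv_mul_cancel_right]

open scoped commutatorElement

theorem SemidirectProduct.commutatorElement_inl_inr {N G : Type*} [Group N] [Group G]
    {φ : G →* MulAut N} (n : N) (g : G) :
    ⁅(inl n : N ⋊[φ] G), (inr g : N ⋊[φ] G)⁆ = inl (n * φ g n⁻¹) := by
  rw [commutatorElement_def, map_mul, inl_aut, map_inv, map_inv]
  group

theorem exists_commutatorElement_inl_inr_eq_inl (G : Type*) [Group G] (f : ℤ → G) :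
    ∃ f' : ℤ → G,
      (SemidirectProduct.inl f : (ℤ → G) ⋊[shiftAction G] Multiplicative ℤ) =
        ⁅(SemidirectProduct.inl f' : (ℤ → G) ⋊[shiftAction G] Multiplicative ℤ),
          SemidirectProduct.inr (Multiplicative.ofAdd 1)⁆ := by
  obtain ⟨g, hg⟩ := surjective_inv_mul_shiftAut G f
  refine ⟨g⁻¹, ?_⟩
  rw [SemidirectProduct.commutatorElement_inl_inr, shiftAction_ofAdd_one, inv_inv, ← hg]

/-- For the unrestricted product `F = ∏_{n ∈ ℤ} G` with shift automorphism `σ`, the map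
`f' ↦ f'⁻¹ * σ f'` is surjective.  Consequently, in the semidirect product `F ⋊_σ ℤ`
every element of `F` is a commutator `[f', σ]`, so `F` is contained in the commutator
subgroup. -/
theorem stmt_8 (G : Type*) [Group G] :
    Function.Surjective (fun f' : ℤ → G => f'⁻¹ * shiftAut G f') ∧
    (∀ f : ℤ → G, ∃ f' : ℤ → G,
      (SemidirectProduct.inl f : (ℤ → G) ⋊[shiftAction G] Multiplicative ℤ) =
        ⁅(SemidirectProduct.inl f' : (ℤ → G) ⋊[shiftAction G] Multiplicative ℤ),
          SemidirectProduct.inr (Multiplicative.ofAdd 1)⁆) ∧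
    (SemidirectProduct.inl : (ℤ → G) →* (ℤ → G) ⋊[shiftAction G] Multiplicative ℤ).range
      ≤ commutator ((ℤ → G) ⋊[shiftAction G] Multiplicative ℤ) := by
  refine ⟨surjective_inv_mul_shiftAut G, exists_commutatorElement_inl_inr_eq_inl G, ?_⟩
  rintro _ ⟨f, rfl⟩
  obtain ⟨f', hf'⟩ := exists_commutatorElement_inl_inr_eq_inl G f
  rw [hf']
  exact Subgroup.commutator_mem_commutator (Subgroup.mem_top _) (Subgroup.mem_top _)
end
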